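/- For any sequence (δ_k)_{k≥1} of positive reals, the set Γ_{(δ_k)} of all τ ∈ TS^c(C*_R⟨x(·)⟩) such that for every k ≥ 1, sup over 0 ≤ s,t ≤ k with |s−t| ≤ δ_k and all indices (i,j) of τ((x_{ij}(s) − x_{ij}(t))²)^{1/2} is at most 1/k, is a compact subset of the complete metric space (TS^c(C*_R⟨x(·)⟩), d). -/

import Mathlib

open scoped NNReal

/-- The letters x_{ij}, 1 ≤ i ≤ n+1, 1 ≤ j ≤ r(i). -/
abbrev Letter (n : ℕ) (r : Fin (n + 1) → ℕ) := Σ i : Fin (n + 1), Fin (r i)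

/-- A tracial state on the universal C*-algebra C*_R⟨x(·)⟩ (generated by
self-adjoint elements x_{ij}(t), t ≥ 0, of norm ≤ R) whose GNS processes are
strong-operator continuous, encoded by its moment functional on words.
A word is a list of pairs (letter, time). The fields encode: normalization,
traciality, the *-structure (letters are self-adjoint, so star reverses words),
positivity, the operator norm bound ‖x_{ij}(t)‖ ≤ R (both as the moment growth
bound and as positivity of R² − x_{ij}(t)² in the GNS representation), and
— via Lemma 2.1 — strong-operator continuity of the processes, i.e. joint
continuity of all moments in the time variables. -/
structure TracialStateC (n : ℕ) (r : Fin (n + 1) → ℕ) (R : ℝ) where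
  tr : List (Letter n r × ℝ≥0) → ℂ
  normalized : tr [] = 1
  tracial : ∀ w v : List (Letter n r × ℝ≥0), tr (w ++ v) = tr (v ++ w)
  star_word : ∀ w : List (Letter n r × ℝ≥0), tr w.reverse = starRingEnd ℂ (tr w)
  positive : ∀ (k : ℕ) (ws : Fin k → List (Letter n r × ℝ≥0)) (c : Fin k → ℂ),
    0 ≤ (∑ a, ∑ b, starRingEnd ℂ (c a) * c b * tr ((ws a).reverse ++ ws b)).re
  norm_bound : ∀ w : List (Letter n r × ℝ≥0), ‖tr w‖ ≤ R ^ w.length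
  generator_bound : ∀ (k : ℕ) (ws : Fin k → List (Letter n r × ℝ≥0))
      (c : Fin k → ℂ) (x : Letter n r) (t : ℝ≥0),
    (∑ a, ∑ b, starRingEnd ℂ (c a) * c b *
        tr ((ws a).reverse ++ [(x, t), (x, t)] ++ ws b)).re ≤
      R ^ 2 * (∑ a, ∑ b, starRingEnd ℂ (c a) * c b *
        tr ((ws a).reverse ++ ws b)).re
  moment_continuous : ∀ (ℓ : ℕ) (ls : Fin ℓ → Letter n r),
    Continuous fun ts : Fin ℓ → ℝ≥0 => tr (List.ofFn fun k => (ls k, ts k))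

/-- The metric d(τ₁,τ₂) = Σ_{m,ℓ ≥ 1} 2^{−m}(2R)^{−ℓ} · max_{w ∈ W_ℓ}
sup_{(t₁,…,t_ℓ) ∈ [0,m]^ℓ} |τ₁(w(t₁,…,t_ℓ)) − τ₂(w(t₁,…,t_ℓ))|. -/
noncomputable def trDist {n : ℕ} {r : Fin (n + 1) → ℕ} {R : ℝ}
    (τ₁ τ₂ : TracialStateC n r R) : ℝ :=
  ∑' q : ℕ × ℕ,
    (1 / 2 ^ (q.1 + 1)) * (1 / (2 * R) ^ (q.2 + 1)) *
      ⨆ ls : Fin (q.2 + 1) → Letter n r,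
        ⨆ ts : Fin (q.2 + 1) → (Set.Icc (0 : ℝ≥0) ((q.1 : ℝ≥0) + 1)),
          ‖(τ₁.tr (List.ofFn fun k => (ls k, (ts k : ℝ≥0))) -
              τ₂.tr (List.ofFn fun k => (ls k, (ts k : ℝ≥0))))‖

/-- τ((x_{ij}(s) − x_{ij}(t))²), expanded into four moments (a real number). -/
noncomputable def sqIncrement {n : ℕ} {r : Fin (n + 1) → ℕ} {R : ℝ}
    (τ : TracialStateC n r R) (p : Letter n r) (s t : ℝ≥0) : ℝ :=
  (τ.tr [(p, s), (p, s)] - τ.tr [(p, s), (p, t)] -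
    τ.tr [(p, t), (p, s)] + τ.tr [(p, t), (p, t)]).re

/-- The set Γ_{(δ_k)} of Lemma 2.2(2): uniform modulus-of-continuity constraints
(indexed by k ≥ 1, encoded by k+1 over k : ℕ). -/
def GammaSet {n : ℕ} {r : Fin (n + 1) → ℕ} {R : ℝ} (δk : ℕ → ℝ) :
    Set (TracialStateC n r R) :=
  {τ | ∀ (k : ℕ) (s t : ℝ≥0), (s : ℝ) ≤ k + 1 → (t : ℝ) ≤ k + 1 →
    |(s : ℝ) - (t : ℝ)| ≤ δk k → ∀ p : Letter n r,
      Real.sqrt (sqIncrement τ p s t) ≤ 1 / (k + 1)}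

/-!
Cauchy–Schwarz in the GNS space, combined with traciality, bounds the change of a moment under a
change of its times: `|τ(w(t)) - τ(w(t'))| ≤ R^(ℓ-1) Σₘ τ((x(tₘ) - x(t'ₘ))²)^(1/2)`. On `Γ` the
right-hand side is uniformly small, so for each word shape the moments of the states in `Γ` form an
equicontinuous family of functions of the times. Tychonoff gives a subsequence converging at every
word whose times lie in a countable dense set; equicontinuity spreads this to all times and makes
the convergence uniform on the compact boxes `[0, T]^ℓ`, which is convergence in `d`. The limit
functional is again a state in `Γ`, since every defining condition is closed under pointwise limits
of moments, and its moments are continuous as limits of an equicontinuous family.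
-/

open Filter Topology

theorem exists_strictMono_tendsto_of_norm_le {ι E : Type*} [Countable ι] [NormedAddCommGroup E]
    [ProperSpace E] (f : ℕ → ι → E) (B : ι → ℝ) (hf : ∀ a i, ‖f a i‖ ≤ B i) :
    ∃ g : ι → E, ∃ φ : ℕ → ℕ, StrictMono φ ∧ Tendsto (f ∘ φ) atTop (𝓝 g) := by
  obtain ⟨g, -, φ, hφ, hg⟩ :=
    (isCompact_univ_pi fun i => isCompact_closedBall (0 : E) (B i)).tendsto_subseq (x := f)
      fun a => Set.mem_univ_pi.2 fun i => mem_closedBall_zero_iff.2 (hf a i)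
  exact ⟨g, φ, hφ, hg⟩

theorem EquicontinuousAt.cauchySeq_of_mem_closure {X α : Type*} [TopologicalSpace X]
    [PseudoMetricSpace α] {F : ℕ → X → α} {s : Set X} {x : X} (hF : EquicontinuousAt F x)
    (hs : ∀ y ∈ s, CauchySeq (F · y)) (hx : x ∈ closure s) : CauchySeq (F · x) := by
  rw [Metric.cauchySeq_iff]
  intro ε hε
  obtain ⟨y, hFy, hy⟩ :=
    ((Metric.equicontinuousAt_iff_right.1 hF (ε / 3) (by positivity)).and_frequently
      (mem_closure_iff_frequently.1 hx)).exists
  obtain ⟨N, hN⟩ := Metric.cauchySeq_iff.1 (hs y hy) (ε / 3) (by positivity)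
  refine ⟨N, fun a ha b hb => ?_⟩
  calc dist (F a x) (F b x)
        ≤ dist (F a x) (F a y) + dist (F a y) (F b y) + dist (F b y) (F b x) :=
          dist_triangle4 _ _ _ _
    _ < ε / 3 + ε / 3 + ε / 3 := by
        gcongr
        · exact hFy a
        · exact hN a ha b hb
        · rw [dist_comm]; exact hFy b
    _ = ε := by ring

theorem Equicontinuous.tendstoUniformlyOn_of_tendsto {ι X α : Type*} [TopologicalSpace X]
    [UniformSpace α] {F : ι → X → α} {f : X → α} {l : Filter ι} (hF : Equicontinuous F)
    (hf : Tendsto F l (𝓝 f)) {K : Set X} (hK : IsCompact K) : TendstoUniformlyOn F f l K := by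
  have hcover : ⋃₀ {K : Set X | IsCompact K} = Set.univ :=
    Set.sUnion_eq_univ_iff.2 fun x => ⟨{x}, isCompact_singleton, rfl⟩
  have := (EquicontinuousOn.tendsto_uniformOnFun_iff_pi (fun K hK => hK) hcover
    (fun K _ => hF.equicontinuousOn K) l f).2 hf
  exact UniformOnFun.tendsto_iff_tendstoUniformlyOn.1 this K hK

abbrev Word (n : ℕ) (r : Fin (n + 1) → ℕ) := List (Letter n r × ℝ≥0)

namespace TracialStateC

variable {n : ℕ} {r : Fin (n + 1) → ℕ} {R : ℝ}

def moment (τ : TracialStateC n r R) {ℓ : ℕ} (ls : Fin ℓ → Letter n r)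
    (ts : Fin ℓ → ℝ≥0) : ℂ :=
  τ.tr (List.ofFn fun i => (ls i, ts i))

theorem norm_moment_le (τ : TracialStateC n r R) {ℓ : ℕ} (ls : Fin ℓ → Letter n r)
    (ts : Fin ℓ → ℝ≥0) : ‖τ.moment ls ts‖ ≤ R ^ ℓ := by
  simpa [moment] using τ.norm_bound (List.ofFn fun i => (ls i, ts i))

theorem tr_eq_moment (τ : TracialStateC n r R) (w : Word n r) :
    τ.tr w = τ.moment (fun i => (w.get i).1) (fun i => (w.get i).2) := by
  simp [moment]

/-- The GNS inner product `⟪Σ cₐ wₐ, Σ d_b w_b⟫ = τ((Σ cₐ wₐ)* (Σ d_b w_b))` on the span of the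
words `ws`. -/
def gram (τ : TracialStateC n r R) {k : ℕ} (ws : Fin k → Word n r) (c d : Fin k → ℂ) : ℂ :=
  ∑ a, ∑ b, starRingEnd ℂ (c a) * d b * τ.tr ((ws a).reverse ++ ws b)

@[reducible] def gramCore (τ : TracialStateC n r R) {k : ℕ} (ws : Fin k → Word n r) :
    PreInnerProductSpace.Core ℂ (Fin k → ℂ) where
  inner := τ.gram ws
  conj_inner_symm c d := by
    simp only [gram, map_sum, map_mul, Complex.conj_conj, ← τ.star_word, List.reverse_append,
      List.reverse_reverse]
    rw [Finset.sum_comm]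
    simp only [mul_comm (d _) (starRingEnd ℂ _)]
  re_inner_nonneg c := τ.positive k ws c
  add_left c c' d := by simp [gram, add_mul, Finset.sum_add_distrib]
  smul_left c d z := by simp [gram, Finset.mul_sum, mul_assoc]

theorem norm_gram_sq_le (τ : TracialStateC n r R) {k : ℕ}
    (ws : Fin k → Word n r) (c d : Fin k → ℂ) :
    ‖τ.gram ws c d‖ ^ 2 ≤ (τ.gram ws c c).re * (τ.gram ws d d).re := by
  have hcs := InnerProductSpace.Core.inner_mul_inner_self_le (𝕜 := ℂ) (c := τ.gramCore ws) c d
  change ‖τ.gram ws c d‖ * ‖τ.gram ws d c‖ ≤ (τ.gram ws c c).re * (τ.gram ws d d).re at hcs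
  have hsymm : τ.gram ws d c = starRingEnd ℂ (τ.gram ws c d) :=
    ((τ.gramCore ws).conj_inner_symm d c).symm
  rwa [hsymm, Complex.norm_conj, ← sq] at hcs

theorem norm_tr_append_sub_le (hR : 0 ≤ R) (τ : TracialStateC n r R)
    (C : Word n r) (p : Letter n r) (s t : ℝ≥0) :
    ‖τ.tr (C ++ [(p, s)]) - τ.tr (C ++ [(p, t)])‖ ≤
      R ^ C.length * √(sqIncrement τ p s t) := by
  -- Cauchy–Schwarz for the vectors `C*` and `x_p(s) - x_p(t)`
  set ws := ![C.reverse, [(p, s)], [(p, t)]]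
  have hcs := τ.norm_gram_sq_le ws ![1, 0, 0] ![0, 1, -1]
  have hxy :
      τ.gram ws ![1, 0, 0] ![0, 1, -1] = τ.tr (C ++ [(p, s)]) - τ.tr (C ++ [(p, t)]) := by
    simp [ws, gram, Fin.sum_univ_three]; ring
  have hxx : (τ.gram ws ![1, 0, 0] ![1, 0, 0]).re ≤ (R ^ C.length) ^ 2 := by
    have : (τ.gram ws ![1, 0, 0] ![1, 0, 0]).re = (τ.tr (C ++ C.reverse)).re := by
      simp [ws, gram, Fin.sum_univ_three]
    rw [this, ← pow_mul, mul_two]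
    calc _ ≤ ‖τ.tr (C ++ C.reverse)‖ := Complex.re_le_norm _
      _ ≤ _ := by simpa using τ.norm_bound (C ++ C.reverse)
  have hyy : (τ.gram ws ![0, 1, -1] ![0, 1, -1]).re = sqIncrement τ p s t := by
    simp [ws, gram, Fin.sum_univ_three, sqIncrement]; ring_nf
  have hsq : 0 ≤ sqIncrement τ p s t := hyy ▸ τ.positive 3 ws _
  rw [hxy, hyy] at hcs
  calc _ = √(‖τ.tr (C ++ [(p, s)]) - τ.tr (C ++ [(p, t)])‖ ^ 2) :=
        (Real.sqrt_sq (norm_nonneg _)).symm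
    _ ≤ √((R ^ C.length) ^ 2 * sqIncrement τ p s t) :=
      Real.sqrt_le_sqrt (hcs.trans (mul_le_mul_of_nonneg_right hxx hsq))
    _ = R ^ C.length * √(sqIncrement τ p s t) := by
      rw [Real.sqrt_mul (by positivity), Real.sqrt_sq (by positivity)]

theorem norm_tr_append_map_sub_le (hR : 0 ≤ R) (τ : TracialStateC n r R)
    (L : List (Letter n r × ℝ≥0 × ℝ≥0)) (P : Word n r) :
    ‖τ.tr (P ++ L.map fun q => (q.1, q.2.1)) - τ.tr (P ++ L.map fun q => (q.1, q.2.2))‖ ≤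
      R ^ (P.length + L.length - 1) * (L.map fun q => √(sqIncrement τ q.1 q.2.1 q.2.2)).sum := by
  induction L generalizing P with
  | nil => simp
  | cons q L ih =>
    obtain ⟨p, s, t⟩ := q
    set A := L.map fun q => (q.1, q.2.1)
    set B := L.map fun q => (q.1, q.2.2)
    -- traciality moves the letter being changed to the end of the word
    have hB (x : ℝ≥0) : τ.tr (P ++ (p, x) :: B) = τ.tr ((B ++ P) ++ [(p, x)]) := by
      rw [show P ++ (p, x) :: B = (P ++ [(p, x)]) ++ B by simp, τ.tracial, List.append_assoc]
    calc _ = ‖τ.tr ((P ++ [(p, s)]) ++ A) - τ.tr ((B ++ P) ++ [(p, t)])‖ := by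
          rw [← hB]; simp [A, B]
      _ ≤ ‖τ.tr ((P ++ [(p, s)]) ++ A) - τ.tr ((P ++ [(p, s)]) ++ B)‖ +
          ‖τ.tr ((B ++ P) ++ [(p, s)]) - τ.tr ((B ++ P) ++ [(p, t)])‖ := by
          rw [← hB s, show P ++ (p, s) :: B = (P ++ [(p, s)]) ++ B by simp]
          exact norm_sub_le_norm_sub_add_norm_sub _ _ _
      _ ≤ _ := add_le_add (ih _) (norm_tr_append_sub_le hR τ _ p s t)
      _ = _ := by
          have e1 : (P ++ [(p, s)]).length + L.length - 1 = P.length + L.length := by simp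
          have e2 : (B ++ P).length = P.length + L.length := by simp [B, add_comm]
          rw [e1, e2, List.map_cons, List.sum_cons, List.length_cons,
            show P.length + (L.length + 1) - 1 = P.length + L.length by omega]
          ring

theorem norm_moment_sub_le (hR : 0 ≤ R) (τ : TracialStateC n r R) {ℓ : ℕ}
    (ls : Fin ℓ → Letter n r) (ts ts' : Fin ℓ → ℝ≥0) :
    ‖τ.moment ls ts - τ.moment ls ts'‖ ≤
      R ^ (ℓ - 1) * ∑ i, √(sqIncrement τ (ls i) (ts i) (ts' i)) := by
  simpa [moment, List.map_ofFn, Function.comp_def, List.sum_ofFn] using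
    norm_tr_append_map_sub_le hR τ (List.ofFn fun i => (ls i, ts i, ts' i)) []

theorem norm_moment_sub_le_of_mem_gammaSet {δk : ℕ → ℝ} (hR : 0 ≤ R)
    {τ : TracialStateC n r R} (hτ : τ ∈ GammaSet δk) (k : ℕ) {ℓ : ℕ} (ls : Fin ℓ → Letter n r)
    {ts ts' : Fin ℓ → ℝ≥0} (hts : ∀ i, (ts i : ℝ) ≤ k + 1) (hts' : ∀ i, (ts' i : ℝ) ≤ k + 1)
    (hclose : ∀ i, |(ts i : ℝ) - ts' i| ≤ δk k) :
    ‖τ.moment ls ts - τ.moment ls ts'‖ ≤ ℓ * R ^ (ℓ - 1) / (k + 1) :=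
  calc _ ≤ R ^ (ℓ - 1) * ∑ i, √(sqIncrement τ (ls i) (ts i) (ts' i)) :=
        norm_moment_sub_le hR τ ls ts ts'
    _ ≤ R ^ (ℓ - 1) * ∑ _i : Fin ℓ, 1 / ((k : ℝ) + 1) := by
        gcongr with i
        exact hτ k _ _ (hts i) (hts' i) (hclose i) (ls i)
    _ = _ := by simp; ring

theorem equicontinuous_moment_of_mem_gammaSet {δk : ℕ → ℝ} (hR : 0 ≤ R)
    (hδk : ∀ k, 0 < δk k) {ι : Type*} {τ : ι → TracialStateC n r R}
    (hτ : ∀ i, τ i ∈ GammaSet δk) {ℓ : ℕ} (ls : Fin ℓ → Letter n r) :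
    Equicontinuous fun i => (τ i).moment ls := by
  intro ts₀
  rw [Metric.equicontinuousAt_iff]
  intro ε hε
  obtain ⟨k, hk, hkε⟩ : ∃ k : ℕ, (∀ j, (ts₀ j : ℝ) ≤ k) ∧ ℓ * R ^ (ℓ - 1) / (k + 1) < ε := by
    have hbox : ∀ᶠ k : ℕ in atTop, ∀ j, (ts₀ j : ℝ) ≤ k :=
      eventually_all.2 fun j => tendsto_natCast_atTop_atTop.eventually_ge_atTop _
    have hsmall : ∀ᶠ k : ℕ in atTop, ℓ * R ^ (ℓ - 1) / ((k : ℝ) + 1) < ε := by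
      have := (tendsto_const_div_atTop_nhds_zero_nat (ℓ * R ^ (ℓ - 1))).comp
        (tendsto_add_atTop_nat 1)
      simpa using this.eventually (gt_mem_nhds hε)
    exact (hbox.and hsmall).exists
  refine ⟨min (δk k) 1, lt_min (hδk k) one_pos, fun ts hts i => ?_⟩
  have hcoord (j : Fin ℓ) : |(ts j : ℝ) - ts₀ j| < min (δk k) 1 :=
    (dist_le_pi_dist ts ts₀ j).trans_lt hts
  rw [dist_eq_norm]
  refine (norm_moment_sub_le_of_mem_gammaSet hR (hτ i) k ls (fun j => ?_) (fun j => ?_)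
    fun j => ?_).trans_lt hkε
  · linarith [hk j]
  · linarith [hk j, (abs_lt.1 (hcoord j)).2, min_le_right (δk k) 1]
  · rw [abs_sub_comm]; exact (hcoord j).le.trans (min_le_left _ _)

def ofTendsto {ι : Type*} {l : Filter ι} [l.NeBot] (v : ι → TracialStateC n r R)
    (g : Word n r → ℂ) (hg : Tendsto (fun a => (v a).tr) l (𝓝 g))
    (hcont : ∀ (ℓ : ℕ) (ls : Fin ℓ → Letter n r),
      Continuous fun ts : Fin ℓ → ℝ≥0 => g (List.ofFn fun k => (ls k, ts k))) :
    TracialStateC n r R where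
  tr := g
  normalized := (isClosed_eq (continuous_apply []) continuous_const).mem_of_tendsto hg
    (.of_forall fun a => (v a).normalized)
  tracial w w' := by
    have hclosed : IsClosed {f : Word n r → ℂ | f (w ++ w') = f (w' ++ w)} :=
      isClosed_eq (by fun_prop) (by fun_prop)
    exact hclosed.mem_of_tendsto hg (.of_forall fun a => (v a).tracial w w')
  star_word w := by
    have hclosed : IsClosed {f : Word n r → ℂ | f w.reverse = starRingEnd ℂ (f w)} :=
      isClosed_eq (by fun_prop) (by fun_prop)
    exact hclosed.mem_of_tendsto hg (.of_forall fun a => (v a).star_word w)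
  positive k ws c := by
    have hclosed : IsClosed {f : Word n r → ℂ |
        0 ≤ (∑ a, ∑ b, starRingEnd ℂ (c a) * c b * f ((ws a).reverse ++ ws b)).re} :=
      isClosed_le continuous_const (by fun_prop)
    exact hclosed.mem_of_tendsto hg (.of_forall fun a => (v a).positive k ws c)
  norm_bound w := by
    have hclosed : IsClosed {f : Word n r → ℂ | ‖f w‖ ≤ R ^ w.length} :=
      isClosed_le (by fun_prop) continuous_const
    exact hclosed.mem_of_tendsto hg (.of_forall fun a => (v a).norm_bound w)
  generator_bound k ws c x t := by
    have hclosed : IsClosed {f : Word n r → ℂ |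
        (∑ a, ∑ b, starRingEnd ℂ (c a) * c b * f ((ws a).reverse ++ [(x, t), (x, t)] ++ ws b)).re ≤
          R ^ 2 * (∑ a, ∑ b, starRingEnd ℂ (c a) * c b * f ((ws a).reverse ++ ws b)).re} :=
      isClosed_le (by fun_prop) (by fun_prop)
    exact hclosed.mem_of_tendsto hg (.of_forall fun a => (v a).generator_bound k ws c x t)
  moment_continuous := hcont

theorem mem_gammaSet_of_tendsto {δk : ℕ → ℝ} {ι : Type*} {l : Filter ι} [l.NeBot]
    {v : ι → TracialStateC n r R} {τ : TracialStateC n r R} (hv : ∀ a, v a ∈ GammaSet δk)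
    (hτ : Tendsto (fun a => (v a).tr) l (𝓝 τ.tr)) : τ ∈ GammaSet δk := by
  intro k s t hs ht hst p
  have hclosed : IsClosed {f : Word n r → ℂ |
      √((f [(p, s), (p, s)] - f [(p, s), (p, t)] - f [(p, t), (p, s)] + f [(p, t), (p, t)]).re)
        ≤ 1 / (k + 1)} :=
    isClosed_le (by fun_prop) continuous_const
  exact hclosed.mem_of_tendsto hτ (.of_forall fun a => hv a k s t hs ht hst p)

noncomputable def momentSupDist (τ₁ τ₂ : TracialStateC n r R) (T : ℝ≥0) (ℓ : ℕ) : ℝ :=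
  ⨆ ls : Fin ℓ → Letter n r, ⨆ ts : Fin ℓ → Set.Icc (0 : ℝ≥0) T,
    ‖τ₁.moment ls (fun i => ts i) - τ₂.moment ls (fun i => ts i)‖

theorem trDist_eq (τ₁ τ₂ : TracialStateC n r R) :
    trDist τ₁ τ₂ = ∑' q : ℕ × ℕ,
      (1 / 2 ^ (q.1 + 1)) * (1 / (2 * R) ^ (q.2 + 1)) * momentSupDist τ₁ τ₂ (q.1 + 1) (q.2 + 1) :=
  rfl

theorem momentSupDist_nonneg (τ₁ τ₂ : TracialStateC n r R) (T : ℝ≥0) (ℓ : ℕ) :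
    0 ≤ momentSupDist τ₁ τ₂ T ℓ :=
  Real.iSup_nonneg fun _ => Real.iSup_nonneg fun _ => norm_nonneg _

theorem momentSupDist_le (hR : 0 ≤ R) (τ₁ τ₂ : TracialStateC n r R) (T : ℝ≥0) (ℓ : ℕ) :
    momentSupDist τ₁ τ₂ T ℓ ≤ 2 * R ^ ℓ := by
  refine Real.iSup_le (fun ls => Real.iSup_le (fun ts => ?_) (by positivity)) (by positivity)
  calc _ ≤ ‖τ₁.moment ls (fun i => ts i)‖ + ‖τ₂.moment ls (fun i => ts i)‖ := norm_sub_le _ _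
    _ ≤ R ^ ℓ + R ^ ℓ := add_le_add (norm_moment_le _ _ _) (norm_moment_le _ _ _)
    _ = 2 * R ^ ℓ := by ring

theorem tendsto_momentSupDist_zero {ι : Type*} {l : Filter ι} {v : ι → TracialStateC n r R}
    {τ : TracialStateC n r R} {T : ℝ≥0} {ℓ : ℕ}
    (h : ∀ ls : Fin ℓ → Letter n r,
      TendstoUniformlyOn (fun a => (v a).moment ls) (τ.moment ls) l (Set.Icc 0 fun _ => T)) :
    Tendsto (fun a => momentSupDist (v a) τ T ℓ) l (𝓝 0) := by
  rw [Metric.tendsto_nhds]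
  intro ε hε
  have hunif : ∀ᶠ a in l, ∀ ls, ∀ ts ∈ Set.Icc 0 fun _ => T,
      dist (τ.moment ls ts) ((v a).moment ls ts) < ε / 2 :=
    eventually_all.2 fun ls => Metric.tendstoUniformlyOn_iff.1 (h ls) _ (half_pos hε)
  filter_upwards [hunif] with a ha
  rw [Real.dist_0_eq_abs, abs_of_nonneg (momentSupDist_nonneg _ _ _ _)]
  refine (Real.iSup_le (fun ls => Real.iSup_le (fun ts => ?_) (by positivity))
    (by positivity)).trans_lt (half_lt_self hε)
  rw [← dist_eq_norm, dist_comm]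
  exact (ha ls _ ⟨fun i => (ts i).2.1, fun i => (ts i).2.2⟩).le

theorem tendsto_trDist_zero (hR : 0 < R) {ι : Type*} {l : Filter ι}
    {v : ι → TracialStateC n r R} {τ : TracialStateC n r R}
    (h : ∀ (ℓ : ℕ) (ls : Fin ℓ → Letter n r) (T : ℝ≥0),
      TendstoUniformlyOn (fun a => (v a).moment ls) (τ.moment ls) l (Set.Icc 0 fun _ => T)) :
    Tendsto (fun a => trDist (v a) τ) l (𝓝 0) := by
  set c : ℕ × ℕ → ℝ := fun q => (1 / 2 ^ (q.1 + 1)) * (1 / (2 * R) ^ (q.2 + 1))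
  have hc (q : ℕ × ℕ) : c q * (2 * R ^ (q.2 + 1)) = (1 / 2) ^ (q.1 + 1) * (1 / 2) ^ q.2 := by
    simp only [c, div_pow, one_pow, mul_pow, pow_succ]
    field_simp
  have hsum : Summable fun q : ℕ × ℕ => c q * (2 * R ^ (q.2 + 1)) := by
    simp only [hc]
    exact ((summable_nat_add_iff 1).2 summable_geometric_two).mul_of_nonneg
      summable_geometric_two (fun _ => by positivity) fun _ => by positivity
  have := tendsto_tsum_of_dominated_convergence hsum
    (fun q => (tendsto_momentSupDist_zero (h (q.2 + 1) · (q.1 + 1))).const_mul (c q))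
    (.of_forall fun a q => by
      rw [Real.norm_of_nonneg (mul_nonneg (by positivity) (momentSupDist_nonneg _ _ _ _))]
      gcongr
      exact momentSupDist_le hR.le _ _ _ _)
  simpa only [trDist_eq, mul_zero, tsum_zero] using this

end TracialStateC

open TracialStateC

/-- Lemma 2.2(2): for any sequence (δ_k) of positive reals, Γ_{(δ_k)} is a
compact subset of (TS^c(C*_R⟨x(·)⟩), d), here expressed as sequential
compactness with respect to the metric d. -/
theorem gammaSet_compact (n : ℕ) (r : Fin (n + 1) → ℕ) (R : ℝ) (hR : 0 < R)
    (δk : ℕ → ℝ) (hδk : ∀ k, 0 < δk k)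
    (u : ℕ → TracialStateC n r R) (hu : ∀ a, u a ∈ GammaSet δk) :
    ∃ τ ∈ (GammaSet δk : Set (TracialStateC n r R)),
      ∃ φ : ℕ → ℕ, StrictMono φ ∧
        Filter.Tendsto (fun a => trDist (u (φ a)) τ) Filter.atTop (nhds 0) := by
  -- a subsequence can be extracted only for countably many moments at once
  obtain ⟨S, hSc, hSd⟩ := TopologicalSpace.exists_countable_dense ℝ≥0
  have := hSc.to_subtype
  obtain ⟨g₀, φ, hφ, hg₀⟩ := exists_strictMono_tendsto_of_norm_le
    (fun a (w : Σ ℓ, (Fin ℓ → Letter n r) × (Fin ℓ → S)) => (u a).moment w.2.1 fun i => w.2.2 i)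
    (fun w => R ^ w.1) fun a w => norm_moment_le _ _ _
  have hequi (ℓ : ℕ) (ls : Fin ℓ → Letter n r) : Equicontinuous fun a => (u (φ a)).moment ls :=
    equicontinuous_moment_of_mem_gammaSet hR.le hδk (fun a => hu (φ a)) ls
  have hcauchy (w : Word n r) : CauchySeq fun a => (u (φ a)).tr w := by
    simp only [tr_eq_moment _ w]
    refine (hequi _ _ _).cauchySeq_of_mem_closure ?_
      (DenseRange.piMap (fun _ => hSd.denseRange_val) _)
    rintro _ ⟨σ, rfl⟩
    exact (tendsto_pi_nhds.1 hg₀ ⟨_, _, σ⟩).cauchySeq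
  choose g hg using fun w => cauchySeq_tendsto_of_complete (hcauchy w)
  have hlim : Tendsto (fun a => (u (φ a)).tr) atTop (𝓝 g) := tendsto_pi_nhds.2 hg
  have hmoment (ℓ : ℕ) (ls : Fin ℓ → Letter n r) : Tendsto (fun a => (u (φ a)).moment ls) atTop
      (𝓝 fun ts => g (List.ofFn fun i => (ls i, ts i))) :=
    tendsto_pi_nhds.2 fun ts => hg _
  let τ := ofTendsto (u ∘ φ) g hlim fun ℓ ls =>
    (hmoment ℓ ls).continuous_of_equicontinuous (hequi ℓ ls)
  exact ⟨τ, mem_gammaSet_of_tendsto (fun a => hu (φ a)) hlim, φ, hφ, tendsto_trDist_zero hR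
    fun ℓ ls _ => (hequi ℓ ls).tendstoUniformlyOn_of_tendsto (hmoment ℓ ls) isCompact_Icc⟩
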